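/- With the bilinear form of Proposition 1.1 on the free superalgebra F and i a real index, the norm of the divided power is (a_i^{(n)}, a_i^{(n)}) = q_i^{binom(n,2)} (1 - (-1)^{p(i)} q_i^2)^{-n} ([n]!_i)^{-1} for all n ≥ 0. -/

import Mathlib

open scoped BigOperators

noncomputable section

/-- The base field `ℚ(q)`. -/
abbrev K : Type := RatFunc ℚ

/-- The indeterminate `q`. -/
def qq : K := RatFunc.X

/-- Words in the generators `a_{il}`, `(i,l) ∈ I^∞ = I × ℤ_{>0}`. -/
abbrev Word (I : Type) := FreeMonoid (I × ℕ+)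

/-- The parity of a word: the sum of the parities `l·p(i)` of its letters. -/
def wP {I : Type} (p : I → ℕ) (w : Word I) : ℕ :=
  ((FreeMonoid.toList w).map fun a => (a.2 : ℕ) * p a.1).sum

/-- The pairing `(|w|, |w'|)` of the weights of two words, where the letter
`(i,l)` has weight `l·α_i` and `(α_i, α_j) = B i j`. -/
def wB {I : Type} (B : I → I → ℤ) (w w' : Word I) : ℤ :=
  ((FreeMonoid.toList w).map fun a =>
    (((FreeMonoid.toList w').map fun b => (a.2 : ℤ) * (b.2 : ℤ) * B a.1 b.1)).sum).sum

/-- The weight of a word in the root lattice `Q = ⊕ ℤα_i`. -/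
def wWt {I : Type} (w : Word I) : I →₀ ℤ :=
  ((FreeMonoid.toList w).map fun a => Finsupp.single a.1 (a.2 : ℤ)).sum

/-- The free associative `ℚ(q)`-superalgebra `F` on the generators `a_{il}`. -/
abbrev F (I : Type) := MonoidAlgebra K (Word I)

/-- The underlying vector space of `F ⊗ F`, with basis the pairs of words. -/
abbrev M (I : Type) := (Word I × Word I) →₀ K

/-- The basis element of `F` corresponding to a word. -/
def toF {I : Type} (w : Word I) : F I := MonoidAlgebra.single w 1

/-- The generator `a_{il}` of `F`. -/
def gen {I : Type} (i : I) (l : ℕ+) : F I := toF (FreeMonoid.of (i, l))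

/-- The twisted multiplication on `F ⊗ F`:
`(x₁⊗x₂)(x₃⊗x₄) = (-1)^{p(x₂)p(x₃)} q^{(|x₂|,|x₃|)} x₁x₃ ⊗ x₂x₄`. -/
def twmul {I : Type} (p : I → ℕ) (B : I → I → ℤ) (f g : M I) : M I :=
  f.sum fun a ca => g.sum fun b cb =>
    Finsupp.single (a.1 * b.1, a.2 * b.2)
      (ca * cb * (-1 : K) ^ (wP p a.2 * wP p b.1) * qq ^ (wB B a.2 b.1))

/-- Word reversal. -/
def wrev {I : Type} (w : Word I) : Word I :=
  FreeMonoid.ofList (FreeMonoid.toList w).reverse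

/-- The anti-automorphism `σ` of `F` fixing each generator `a_{il}`:
it reverses every word. -/
def sigmaF {I : Type} : F I → F I :=
  fun x => MonoidAlgebra.ofCoeff (Finsupp.mapDomain wrev x.coeff)

/-- `q_i = q^{d_i}`. -/
def qi {I : Type} (d : I → ℕ+) (i : I) : K := qq ^ (d i : ℕ)

/-- The super quantum integer `[m]` at parameter `Q` and parity `pi`. -/
def sInt (pi : ℕ) (Q : K) (m : ℕ) : K :=
  (((-1) ^ pi * Q) ^ m - Q⁻¹ ^ m) / ((-1) ^ pi * Q - Q⁻¹)

/-- The super quantum factorial `[n]!` at parameter `Q` and parity `pi`. -/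
def sFact (pi : ℕ) (Q : K) (n : ℕ) : K := ∏ s ∈ Finset.range n, sInt pi Q (s + 1)

/-- The divided power `a_i^{(n)} = a_i^n / [n]!_i` for a real index `i`. -/
def dp {I : Type} (p : I → ℕ) (d : I → ℕ+) (i : I) (n : ℕ) : F I :=
  (sFact (p i) (qi d i) n)⁻¹ • (gen i 1) ^ n


/-!
Write `a = a_i` and `r = (-1)^{p(i)} q_i²`. Since `a` is primitive, `ρ(aⁿ)` is given by a
`q`-binomial theorem in the twisted tensor square: `ρ(aⁿ) = ∑_{s+t=n} [n choose s]_r aˢ ⊗ aᵗ`.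
Pairing `aⁿ⁺¹` with `a · aⁿ`, only the term `s = 1` survives, because `(aˢ, a) = 0` for `s ≠ 1`.
Hence `(aⁿ⁺¹, aⁿ⁺¹) = (1 + r + ⋯ + rⁿ) (a, a) (aⁿ, aⁿ)`, and `1 + r + ⋯ + rⁿ = q_iⁿ [n+1]_i`.
-/

open Finset

section GaussBinom

variable {R : Type*} [Semiring R]

/-- `gaussBinom r s t` is the Gaussian binomial coefficient `[s + t choose s]_r`. -/
def gaussBinom (r : R) : ℕ → ℕ → R
  | 0, _ => 1
  | _ + 1, 0 => 1
  | s + 1, t + 1 => gaussBinom r s (t + 1) + r ^ (s + 1) * gaussBinom r (s + 1) t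

theorem gaussBinom_one_left (r : R) (n : ℕ) :
    gaussBinom r 1 n = ∑ k ∈ range (n + 1), r ^ k := by
  induction n with
  | zero => simp [gaussBinom]
  | succ n ih => rw [gaussBinom, ih, gaussBinom, pow_one, add_comm, ← geom_sum_succ]

theorem sum_antidiagonal_succ_gaussBinom_smul {V : Type*} [AddCommMonoid V] [Module R V]
    (r : R) (e : ℕ × ℕ → V) (n : ℕ) :
    ∑ p ∈ antidiagonal (n + 1), gaussBinom r p.1 p.2 • e p =
      ∑ p ∈ antidiagonal n, gaussBinom r p.1 p.2 • e (p.1 + 1, p.2) +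
        ∑ p ∈ antidiagonal n, (r ^ p.1 * gaussBinom r p.1 p.2) • e (p.1, p.2 + 1) := by
  cases n with
  | zero => simp [Nat.sum_antidiagonal_succ, gaussBinom, add_comm]
  | succ n =>
    rw [Nat.sum_antidiagonal_succ, Nat.sum_antidiagonal_succ', Nat.sum_antidiagonal_succ',
      Nat.sum_antidiagonal_succ]
    simp only [gaussBinom, add_smul, sum_add_distrib, pow_zero, one_mul]
    abel

end GaussBinom

section Words

variable {I : Type}

theorem toF_one : toF (1 : Word I) = 1 := rfl

theorem toF_mul (w w' : Word I) : toF w * toF w' = toF (w * w') := by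
  simp [toF, MonoidAlgebra.single_mul_single]

theorem toF_pow (w : Word I) (n : ℕ) : toF w ^ n = toF (w ^ n) := by
  simp [toF, MonoidAlgebra.single_pow]

theorem wP_mul (p : I → ℕ) (w w' : Word I) : wP p (w * w') = wP p w + wP p w' := by
  simp [wP]

theorem wP_pow (p : I → ℕ) (w : Word I) (n : ℕ) : wP p (w ^ n) = n * wP p w := by
  induction n with
  | zero => simp [wP]
  | succ n ih => rw [pow_succ, wP_mul, ih, add_mul, one_mul]

theorem wB_mul_right (B : I → I → ℤ) (w w' w'' : Word I) :
    wB B w (w' * w'') = wB B w w' + wB B w w'' := by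
  simp [wB, List.sum_map_add]

theorem wB_pow_right (B : I → I → ℤ) (w w' : Word I) (n : ℕ) :
    wB B w (w' ^ n) = n * wB B w w' := by
  induction n with
  | zero => simp [wB]
  | succ n ih => rw [pow_succ, wB_mul_right, ih]; push_cast; ring

end Words

section TwistedProduct

variable {I : Type} (p : I → ℕ) (B : I → I → ℤ)

/-- The scalar `r` with `(1 ⊗ w)(w ⊗ 1) = r • (w ⊗ w)` in the twisted product. -/
def braiding (w : Word I) : K := (-1) ^ (wP p w * wP p w) * qq ^ wB B w w

theorem twmul_single_single (a₁ a₂ b₁ b₂ : Word I) (ca cb : K) :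
    twmul p B (Finsupp.single (a₁, a₂) ca) (Finsupp.single (b₁, b₂) cb) =
      Finsupp.single (a₁ * b₁, a₂ * b₂)
        (ca * cb * (-1 : K) ^ (wP p a₂ * wP p b₁) * qq ^ wB B a₂ b₁) := by
  unfold twmul
  rw [Finsupp.sum_single_index, Finsupp.sum_single_index] <;> simp

theorem twmul_add_left (f₁ f₂ g : M I) :
    twmul p B (f₁ + f₂) g = twmul p B f₁ g + twmul p B f₂ g := by
  unfold twmul
  apply Finsupp.sum_add_index' <;> intros <;>
    simp [add_mul, Finsupp.single_add, ← Finsupp.sum_add]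

theorem twmul_add_right (f g₁ g₂ : M I) :
    twmul p B f (g₁ + g₂) = twmul p B f g₁ + twmul p B f g₂ := by
  unfold twmul
  rw [← Finsupp.sum_add]
  refine Finsupp.sum_congr fun _ _ => ?_
  apply Finsupp.sum_add_index' <;> intros <;> simp [mul_add, add_mul, Finsupp.single_add]

theorem twmul_sum_right {α : Type*} (f : M I) (s : Finset α) (g : α → M I) :
    twmul p B f (∑ a ∈ s, g a) = ∑ a ∈ s, twmul p B f (g a) :=
  map_sum (AddMonoidHom.mk' (twmul p B f) (twmul_add_right p B f)) g s

theorem twmul_single_left_single_pow (w : Word I) (s t : ℕ) (c : K) :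
    twmul p B (Finsupp.single (w, 1) 1) (Finsupp.single (w ^ s, w ^ t) c) =
      Finsupp.single (w ^ (s + 1), w ^ t) c := by
  rw [twmul_single_single, pow_succ']
  simp [wP, wB]

theorem twmul_single_right_single_pow (w : Word I) (s t : ℕ) (c : K) :
    twmul p B (Finsupp.single (1, w) 1) (Finsupp.single (w ^ s, w ^ t) c) =
      Finsupp.single (w ^ s, w ^ (t + 1)) (braiding p B w ^ s * c) := by
  rw [twmul_single_single, one_mul, pow_succ', braiding, wP_pow, wB_pow_right,
    show wP p w * (s * wP p w) = wP p w * wP p w * s by ring, pow_mul,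
    show (s : ℤ) * wB B w w = wB B w w * s by ring, zpow_mul, zpow_natCast]
  congr 1
  ring

end TwistedProduct

section Pairing

variable {I : Type}

structure IsTwistedCoproduct (p : I → ℕ) (B : I → I → ℤ) (rho : F I →ₗ[K] M I) : Prop where
  map_one : rho 1 = Finsupp.single (1, 1) 1
  map_mul : ∀ x y : F I, rho (x * y) = twmul p B (rho x) (rho y)

structure IsHopfPairing (rho : F I →ₗ[K] M I) (Bf : F I →ₗ[K] F I →ₗ[K] K) : Prop where
  one_one : Bf 1 1 = 1
  mul_right : ∀ x y y' : F I,
    Bf x (y * y') = (rho x).sum fun ab c => c * Bf (toF ab.1) y * Bf (toF ab.2) y'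
  mul_left : ∀ x x' y : F I,
    Bf (x * x') y = (rho y).sum fun ab c => c * Bf x (toF ab.1) * Bf x' (toF ab.2)

structure IsPrimitive (rho : F I →ₗ[K] M I) (w : Word I) : Prop where
  map_toF : rho (toF w) = Finsupp.single (w, 1) 1 + Finsupp.single (1, w) 1

variable {p : I → ℕ} {B : I → I → ℤ} {rho : F I →ₗ[K] M I} {Bf : F I →ₗ[K] F I →ₗ[K] K}
  {w : Word I}

theorem IsTwistedCoproduct.map_toF_pow (hρ : IsTwistedCoproduct p B rho) (hw : IsPrimitive rho w)
    (n : ℕ) :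
    rho (toF (w ^ n)) = ∑ q ∈ antidiagonal n,
      Finsupp.single (w ^ q.1, w ^ q.2) (gaussBinom (braiding p B w) q.1 q.2) := by
  induction n with
  | zero => simp [toF_one, gaussBinom, hρ.map_one]
  | succ n ih =>
    rw [pow_succ', ← toF_mul, hρ.map_mul, hw.map_toF, ih, twmul_add_left, twmul_sum_right,
      twmul_sum_right]
    simp only [twmul_single_left_single_pow, twmul_single_right_single_pow]
    simpa only [Finsupp.smul_single_one] using (sum_antidiagonal_succ_gaussBinom_smul
      (braiding p B w) (fun q => Finsupp.single (w ^ q.1, w ^ q.2) (1 : K)) n).symm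

theorem IsHopfPairing.apply_mul_right (hBf : IsHopfPairing rho Bf) (x y y' : F I) :
    Bf x (y * y') = Finsupp.linearCombination K
      (fun ab : Word I × Word I => Bf (toF ab.1) y * Bf (toF ab.2) y') (rho x) := by
  simp only [hBf.mul_right, Finsupp.linearCombination_apply, smul_eq_mul, mul_assoc]

theorem IsHopfPairing.apply_mul_left (hBf : IsHopfPairing rho Bf) (x x' y : F I) :
    Bf (x * x') y = Finsupp.linearCombination K
      (fun ab : Word I × Word I => Bf x (toF ab.1) * Bf x' (toF ab.2)) (rho y) := by
  simp only [hBf.mul_left, Finsupp.linearCombination_apply, smul_eq_mul, mul_assoc]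

theorem IsHopfPairing.apply_toF_one (hBf : IsHopfPairing rho Bf) (hw : IsPrimitive rho w) :
    Bf (toF w) 1 = 0 := by
  have h := hBf.apply_mul_right (toF w) 1 1
  simp only [hw.map_toF, map_add, Finsupp.linearCombination_single, one_smul, mul_one, toF_one,
    hBf.one_one, one_mul] at h
  linear_combination -h

theorem IsHopfPairing.apply_one_toF (hBf : IsHopfPairing rho Bf) (hw : IsPrimitive rho w) :
    Bf 1 (toF w) = 0 := by
  have h := hBf.apply_mul_left 1 1 (toF w)
  simp only [hw.map_toF, map_add, Finsupp.linearCombination_single, one_smul, mul_one, toF_one,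
    hBf.one_one, one_mul] at h
  linear_combination -h

theorem IsHopfPairing.apply_toF_pow_succ_one (hBf : IsHopfPairing rho Bf)
    (hρ : IsTwistedCoproduct p B rho) (hw : IsPrimitive rho w) (n : ℕ) :
    Bf (toF (w ^ (n + 1))) 1 = 0 := by
  rw [pow_succ', ← toF_mul, hBf.apply_mul_left, hρ.map_one, Finsupp.linearCombination_single,
    toF_one, hBf.apply_toF_one hw, zero_mul, smul_zero]

theorem IsHopfPairing.apply_toF_pow_toF (hBf : IsHopfPairing rho Bf)
    (hρ : IsTwistedCoproduct p B rho) (hw : IsPrimitive rho w) (s : ℕ) :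
    Bf (toF (w ^ s)) (toF w) = if s = 1 then Bf (toF w) (toF w) else 0 := by
  match s with
  | 0 => rw [pow_zero, toF_one, hBf.apply_one_toF hw, if_neg zero_ne_one]
  | 1 => simp
  | k + 2 =>
    rw [pow_succ', ← toF_mul, hBf.apply_mul_left, hw.map_toF, map_add,
      Finsupp.linearCombination_single, Finsupp.linearCombination_single, toF_one,
      hBf.apply_toF_pow_succ_one hρ hw, hBf.apply_toF_one hw]
    simp

theorem IsHopfPairing.apply_toF_pow_succ_self (hBf : IsHopfPairing rho Bf)
    (hρ : IsTwistedCoproduct p B rho) (hw : IsPrimitive rho w) (n : ℕ) :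
    Bf (toF (w ^ (n + 1))) (toF (w ^ (n + 1))) =
      (∑ k ∈ range (n + 1), braiding p B w ^ k) * Bf (toF w) (toF w) *
        Bf (toF (w ^ n)) (toF (w ^ n)) := by
  have h := hBf.apply_mul_right (toF (w ^ (n + 1))) (toF w) (toF (w ^ n))
  rw [toF_mul, ← pow_succ', hρ.map_toF_pow hw, map_sum] at h
  rw [h, sum_eq_single_of_mem (1, n) (by simp [add_comm])]
  · simp [gaussBinom_one_left, mul_assoc]
  · rintro ⟨s, t⟩ hst hne
    have hs : s ≠ 1 := by
      rintro rfl
      simp_all [add_comm]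
    simp [hBf.apply_toF_pow_toF hρ hw, hs]

theorem IsHopfPairing.apply_toF_pow_self (hBf : IsHopfPairing rho Bf)
    (hρ : IsTwistedCoproduct p B rho) (hw : IsPrimitive rho w) (n : ℕ) :
    Bf (toF (w ^ n)) (toF (w ^ n)) =
      Bf (toF w) (toF w) ^ n * ∏ m ∈ range n, ∑ k ∈ range (m + 1), braiding p B w ^ k := by
  induction n with
  | zero => simp [toF_one, hBf.one_one]
  | succ n ih =>
    rw [hBf.apply_toF_pow_succ_self hρ hw, ih, prod_range_succ, pow_succ]
    ring

end Pairing

theorem neg_one_pow_mul_qq_pow_ne_one (pi : ℕ) {k : ℕ} (hk : k ≠ 0) :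
    (-1 : K) ^ pi * qq ^ k ≠ 1 := by
  intro h
  have hX : ((-1) ^ pi * Polynomial.X ^ k : Polynomial ℚ) = 1 := by
    apply RatFunc.algebraMap_injective ℚ
    simpa [qq, RatFunc.algebraMap_X] using h
  rcases neg_one_pow_eq_or (Polynomial ℚ) pi with h1 | h1 <;>
    simpa [h1, hk] using congrArg Polynomial.natDegree hX

theorem neg_one_pow_mul_self {R : Type*} [Monoid R] [HasDistribNeg R] (k : ℕ) :
    (-1 : R) ^ (k * k) = (-1) ^ k := by
  rcases Nat.even_or_odd k with h | h
  · rw [h.neg_one_pow, (h.mul_right k).neg_one_pow]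
  · rw [h.neg_one_pow, (h.mul h).neg_one_pow]

section QuantumFactorial

theorem sInt_succ_mul_pow {pi : ℕ} {Q : K} (hQ : Q ≠ 0) (hr : (-1) ^ pi * Q ^ 2 ≠ 1) (m : ℕ) :
    sInt pi Q (m + 1) * Q ^ m = ∑ k ∈ range (m + 1), ((-1) ^ pi * Q ^ 2) ^ k := by
  have hden : (-1) ^ pi * Q - Q⁻¹ ≠ 0 := by
    rw [show (-1) ^ pi * Q - Q⁻¹ = ((-1) ^ pi * Q ^ 2 - 1) * Q⁻¹ by field_simp]
    exact mul_ne_zero (sub_ne_zero.mpr hr) (inv_ne_zero hQ)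
  rw [geom_sum_eq hr, sInt, inv_pow, div_mul_eq_mul_div, div_eq_div_iff hden (sub_ne_zero.mpr hr)]
  field_simp
  ring

theorem prod_geom_sum_eq_pow_choose_mul_sFact {pi : ℕ} {Q : K} (hQ : Q ≠ 0)
    (hr : (-1) ^ pi * Q ^ 2 ≠ 1) (n : ℕ) :
    ∏ m ∈ range n, ∑ k ∈ range (m + 1), ((-1) ^ pi * Q ^ 2) ^ k =
      Q ^ n.choose 2 * sFact pi Q n := by
  induction n with
  | zero => simp [sFact]
  | succ n ih =>
    rw [prod_range_succ, ih, ← sInt_succ_mul_pow hQ hr, sFact, sFact, prod_range_succ,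
      Nat.choose_succ_succ', Nat.choose_one_right]
    ring

end QuantumFactorial

theorem norm_dividedPower_general {I : Type} [DecidableEq I]
    (p : I → ℕ) (d : I → ℕ+) (B : I → I → ℤ)
    (rho : F I →ₗ[K] M I)
    (hrho1 : rho 1 = Finsupp.single (1, 1) 1)
    (hrhomul : ∀ x y : F I, rho (x * y) = twmul p B (rho x) (rho y))
    (hrhogen : ∀ (i : I) (l : ℕ+),
      rho (gen i l) = Finsupp.single (FreeMonoid.of (i, l), 1) 1
        + Finsupp.single (1, FreeMonoid.of (i, l)) 1)
    (Bf : F I →ₗ[K] F I →ₗ[K] K)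
    (h11 : Bf 1 1 = 1)
    (hgenB : ∀ (i : I) (l : ℕ+) (j : I) (k : ℕ+),
      Bf (gen i l) (gen j k) =
        if i = j ∧ l = k then
          (1 - (-1 : K) ^ ((l : ℕ) * p i) * qq ^ (2 * (l : ℕ) * (d i : ℕ)))⁻¹
        else 0)
    (hR : ∀ x y y' : F I,
      Bf x (y * y') = (rho x).sum fun ab c => c * Bf (toF ab.1) y * Bf (toF ab.2) y')
    (hL : ∀ x x' y : F I,
      Bf (x * x') y = (rho y).sum fun ab c => c * Bf x (toF ab.1) * Bf x' (toF ab.2))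
    (i : I) (hre : B i i = 2 * (d i : ℤ)) (n : ℕ) :
    Bf (dp p d i n) (dp p d i n) =
      (qi d i) ^ Nat.choose n 2 * ((1 - (-1 : K) ^ (p i) * (qi d i) ^ 2)⁻¹) ^ n *
        (sFact (p i) (qi d i) n)⁻¹ := by
  set Q := qi d i
  set a : Word I := FreeMonoid.of (i, 1)
  have hQ : Q ≠ 0 := pow_ne_zero _ RatFunc.X_ne_zero
  have hQ2 : qq ^ (2 * (d i : ℕ)) = Q ^ 2 := by rw [mul_comm, pow_mul]; rfl
  have hBii : qq ^ B i i = Q ^ 2 := by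
    rw [hre, ← hQ2, ← zpow_natCast, Nat.cast_mul, Nat.cast_ofNat]
  have hbraid : braiding p B a = (-1) ^ p i * Q ^ 2 := by
    simp [braiding, a, wP, wB, hBii, neg_one_pow_mul_self]
  have hr : (-1) ^ p i * Q ^ 2 ≠ 1 := by
    rw [← hQ2]
    exact neg_one_pow_mul_qq_pow_ne_one _ (by positivity)
  have hnorm : Bf (toF a) (toF a) = (1 - (-1) ^ p i * Q ^ 2)⁻¹ := by
    have h := hgenB i 1 i 1
    simp only [and_self, if_true, PNat.val_ofNat, one_mul, mul_one, hQ2] at h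
    exact h
  have key := IsHopfPairing.apply_toF_pow_self ⟨h11, hR, hL⟩ ⟨hrho1, hrhomul⟩ ⟨hrhogen i 1⟩ n
  rw [hbraid, hnorm, prod_geom_sum_eq_pow_choose_mul_sFact hQ hr] at key
  simp only [dp, gen, toF_pow, map_smul, LinearMap.smul_apply, smul_eq_mul]
  rw [key]
  calc _ = Q ^ n.choose 2 * (1 - (-1) ^ p i * Q ^ 2)⁻¹ ^ n *
        (sFact (p i) Q n / (sFact (p i) Q n * sFact (p i) Q n)) := by ring
    _ = _ := by rw [div_self_mul_self']

/-- Norm of the divided power of a real generator: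
`(a_i^{(n)}, a_i^{(n)}) = q_i^{C(n,2)} (1 - (-1)^{p(i)} q_i²)^{-n} ([n]!_i)⁻¹`. -/
theorem norm_dividedPower {I : Type} [DecidableEq I]
    (p : I → ℕ) (d : I → ℕ+) (B : I → I → ℤ) (hB : ∀ i j, B i j = B j i)
    (rho : F I →ₗ[K] M I)
    (hrho1 : rho 1 = Finsupp.single (1, 1) 1)
    (hrhomul : ∀ x y : F I, rho (x * y) = twmul p B (rho x) (rho y))
    (hrhogen : ∀ (i : I) (l : ℕ+),
      rho (gen i l) = Finsupp.single (FreeMonoid.of (i, l), 1) 1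
        + Finsupp.single (1, FreeMonoid.of (i, l)) 1)
    (Bf : F I →ₗ[K] F I →ₗ[K] K)
    (h11 : Bf 1 1 = 1)
    (hgenB : ∀ (i : I) (l : ℕ+) (j : I) (k : ℕ+),
      Bf (gen i l) (gen j k) =
        if i = j ∧ l = k then
          (1 - (-1 : K) ^ ((l : ℕ) * p i) * qq ^ (2 * (l : ℕ) * (d i : ℕ)))⁻¹
        else 0)
    (hR : ∀ x y y' : F I,
      Bf x (y * y') = (rho x).sum fun ab c => c * Bf (toF ab.1) y * Bf (toF ab.2) y')
    (hL : ∀ x x' y : F I,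
      Bf (x * x') y = (rho y).sum fun ab c => c * Bf x (toF ab.1) * Bf x' (toF ab.2))
    (i : I) (hre : B i i = 2 * (d i : ℤ)) (n : ℕ) :
    Bf (dp p d i n) (dp p d i n) =
      (qi d i) ^ Nat.choose n 2 * ((1 - (-1 : K) ^ (p i) * (qi d i) ^ 2)⁻¹) ^ n *
        (sFact (p i) (qi d i) n)⁻¹ :=
  norm_dividedPower_general p d B rho hrho1 hrhomul hrhogen Bf h11 hgenB hR hL i hre n
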